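/- arXiv:2408.09863 — 4 statements merged into one kernel-verified Lean document; each statement's English description precedes it below -/
import Mathlib

section
/- Let $R$ be an integral domain with fraction field $Q$, and let $X_\infty(R) = \{(\phi_p)_{p \in R^\times} \in \prod_{p \in R^\times} \widehat{R_+} : \phi_q(\tfrac{q}{p} \cdot x) = \phi_p(x) \text{ for all } x, \text{ whenever } p \mid q\}$, with $Q^\times$ acting by $(\tfrac{p_0}{q_0} \cdot \phi)_p = \phi_{p p_0}(q_0 \cdot)$. If $\phi = (\phi_p) \in X_\infty(R)$ is not identically the trivial character, then the isotropy group $Q^\times_\phi = \{g \in Q^\times : g \cdot \phi = \phi\}$ is trivial. -/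
/-!
If `p₀/q₀` fixes `φ`, then `φ_{p p₀}(q₀ x) = φ_p(x) = φ_{p p₀}(p₀ x)` by compatibility, so the
character `φ_{p p₀}` is trivial on `(q₀ - p₀) R`. Were `d = q₀ - p₀` nonzero, compatibility would
transport this to every index: `φ_q(x) = φ_{q d p₀}(d p₀ x) = 1`.
-/

lemma map_sub_eq_one_of_map_eq {A M : Type*} [AddGroup A] [MonoidWithZero M]
    [IsRightCancelMulZero M] {f : A → M} (hf : ∀ x y, f (x + y) = f x * f y) {a b : A}
    (hb : f b ≠ 0) (h : f a = f b) : f (a - b) = 1 :=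
  mul_right_cancel₀ hb (by rw [← hf, sub_add_cancel, h, one_mul])

section Compatible

variable {R : Type*} [CommRing R] [NoZeroDivisors R] {φ : {p : R // p ≠ 0} → R → ℂ}
  (hcompat : ∀ (p q : {p : R // p ≠ 0}) (c : R), c * (p : R) = (q : R) →
    ∀ x, φ q (c * x) = φ p x)
include hcompat

lemma map_sub_mul_eq_one_of_isotropy (hchar : ∀ p x y, φ p (x + y) = φ p x * φ p y)
    (hne : ∀ p x, φ p x ≠ 0) {p₀ q₀ : R} (hp₀ : p₀ ≠ 0)
    (hfix : ∀ p : {p : R // p ≠ 0}, ∀ x : R,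
      φ ⟨(p : R) * p₀, mul_ne_zero p.2 hp₀⟩ (q₀ * x) = φ p x)
    (p : {p : R // p ≠ 0}) (x : R) :
    φ ⟨(p : R) * p₀, mul_ne_zero p.2 hp₀⟩ ((q₀ - p₀) * x) = 1 := by
  have hcompat_p₀ := hcompat p ⟨(p : R) * p₀, mul_ne_zero p.2 hp₀⟩ p₀ (mul_comm _ _) x
  rw [sub_mul]
  exact map_sub_eq_one_of_map_eq (hchar _) (hne _ _) ((hfix p x).trans hcompat_p₀.symm)

lemma eq_one_of_map_mul_eq_one {d e : R} (hd : d ≠ 0) (he : e ≠ 0)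
    (h : ∀ (p : {p : R // p ≠ 0}) (x : R), φ ⟨(p : R) * e, mul_ne_zero p.2 he⟩ (d * x) = 1)
    (q : {p : R // p ≠ 0}) (x : R) : φ q x = 1 := by
  have hqd : (q : R) * d ≠ 0 := mul_ne_zero q.2 hd
  rw [← hcompat q ⟨(q : R) * d * e, mul_ne_zero hqd he⟩ (d * e) (by ring) x, mul_assoc d e x]
  exact h ⟨(q : R) * d, hqd⟩ (e * x)

end Compatible

theorem stmt2_general (R : Type*) [CommRing R] [IsDomain R]
    (φ : {p : R // p ≠ 0} → R → ℂ)
    (habs : ∀ p x, ‖φ p x‖ = 1)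
    (hchar : ∀ p x y, φ p (x + y) = φ p x * φ p y)
    (hcompat : ∀ (p q : {p : R // p ≠ 0}) (c : R), c * (p : R) = (q : R) →
      ∀ x, φ q (c * x) = φ p x)
    (hnontriv : ∃ p x, φ p x ≠ 1)
    (p₀ q₀ : R) (hp₀ : p₀ ≠ 0)
    (hfix : ∀ p : {p : R // p ≠ 0}, ∀ x : R,
      φ ⟨(p : R) * p₀, mul_ne_zero p.2 hp₀⟩ (q₀ * x) = φ p x) :
    p₀ = q₀ := by
  by_contra hneq
  have hne : ∀ p x, φ p x ≠ 0 := fun p x h => by simpa [h] using habs p x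
  obtain ⟨p, x, hpx⟩ := hnontriv
  exact hpx (eq_one_of_map_mul_eq_one hcompat (sub_ne_zero.2 (Ne.symm hneq)) hp₀
    (map_sub_mul_eq_one_of_isotropy hcompat hchar hne hp₀ hfix) p x)

/-- If `φ ∈ X_∞(R)` is not the trivial family of characters, then its isotropy group
under the `Q^×`-action is trivial: any `p₀/q₀ ∈ Q^×` fixing `φ` equals `1`. -/
theorem stmt2 (R : Type*) [CommRing R] [IsDomain R]
    (φ : {p : R // p ≠ 0} → R → ℂ)
    (habs : ∀ p x, ‖φ p x‖ = 1)
    (hchar : ∀ p x y, φ p (x + y) = φ p x * φ p y)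
    (hcompat : ∀ (p q : {p : R // p ≠ 0}) (c : R), c * (p : R) = (q : R) →
      ∀ x, φ q (c * x) = φ p x)
    (hnontriv : ∃ p x, φ p x ≠ 1)
    (p₀ q₀ : R) (hp₀ : p₀ ≠ 0) (hq₀ : q₀ ≠ 0)
    (hfix : ∀ p : {p : R // p ≠ 0}, ∀ x : R,
      φ ⟨(p : R) * p₀, mul_ne_zero p.2 hp₀⟩ (q₀ * x) = φ p x) :
    p₀ = q₀ :=
  stmt2_general R φ habs hchar hcompat hnontriv p₀ q₀ hp₀ hfix
end

section
/- Let $R$ be a GCD domain, and suppose $p_1 R^\times \cap p_2 R^\times = p R^\times$ for $p_1, p_2, p \in R^\times$. Then in the opposite $ax+b$-semigroup $S = (R_+ \rtimes R^\times)^{\mathrm{op}}$ with multiplication $(r_1,q_1) \times (r_2,q_2) = (r_2 + q_2 r_1, q_1 q_2)$, one has for all $r_1, r_2 \in R$: $(r_1,p_1) \times S \cap (r_2,p_2) \times S = (0,p) \times S$. In particular, $S$ is a right LCM semigroup. -/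
/-- If `p₁R^× ∩ p₂R^× = pR^×` in a GCD domain `R`, then in the opposite `ax+b`-semigroup
`S` one has `(r₁,p₁) × S ∩ (r₂,p₂) × S = (0,p) × S`; in particular `S` is right LCM. -/
theorem stmt11 (R : Type*) [CommRing R] [IsDomain R] [GCDMonoid R]
    (opMul : R × R → R × R → R × R)
    (hopMul : ∀ a b : R × R, opMul a b = (b.1 + b.2 * a.1, a.2 * b.2))
    (p₁ p₂ p : R) (hp₁ : p₁ ≠ 0) (hp₂ : p₂ ≠ 0) (hp : p ≠ 0)
    (hint : {x : R | ∃ r : R, r ≠ 0 ∧ x = p₁ * r} ∩ {x : R | ∃ r : R, r ≠ 0 ∧ x = p₂ * r} =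
      {x : R | ∃ r : R, r ≠ 0 ∧ x = p * r})
    (r₁ r₂ : R) :
    {x : R × R | ∃ a : R × R, a.2 ≠ 0 ∧ x = opMul (r₁, p₁) a} ∩
      {x : R × R | ∃ a : R × R, a.2 ≠ 0 ∧ x = opMul (r₂, p₂) a} =
      {x : R × R | ∃ a : R × R, a.2 ≠ 0 ∧ x = opMul (0, p) a} := by
  ext x
  simp only [Set.mem_inter_iff, Set.mem_setOf_eq, hopMul]
  constructor
  · rintro ⟨⟨a, ha, rfl⟩, ⟨b, hb, hx⟩⟩
    have h2 : p₁ * a.2 ∈ {x : R | ∃ r : R, r ≠ 0 ∧ x = p * r} := by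
      rw [← hint]
      constructor
      · exact ⟨a.2, ha, rfl⟩
      · refine ⟨b.2, hb, ?_⟩
        have := congrArg Prod.snd hx
        simpa using this
    obtain ⟨c, hc, hpc⟩ := h2
    exact ⟨(a.1 + a.2 * r₁, c), hc, by simp [hpc]⟩
  · rintro ⟨b, hb, rfl⟩
    have h2 : p * b.2 ∈ {x : R | ∃ r : R, r ≠ 0 ∧ x = p₁ * r} ∩
        {x : R | ∃ r : R, r ≠ 0 ∧ x = p₂ * r} := by
      rw [hint]; exact ⟨b.2, hb, rfl⟩
    obtain ⟨⟨c, hc, hpc⟩, ⟨d, hd, hpd⟩⟩ := h2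
    exact ⟨⟨(b.1 + b.2 * 0 - c * r₁, c), hc, by simp [← hpc]⟩,
      ⟨(b.1 + b.2 * 0 - d * r₂, d), hd, by simp [← hpd]⟩⟩
end

section
/- Let $R$ be an integral domain with fraction field $Q$, let $X_\infty(R)$ be as before with its $Q^\times$-action, and suppose: for any $\epsilon > 0$, any non-trivial $\phi = (\phi_p) \in X_\infty(R)$, any character $\pi$ of $R_+$, any $P \in R^\times$, and any $r_1, \dots, r_n \in R$, there exist $p, q \in R^\times$ with $P \mid p$ such that $|\phi_p(q r_i) - \pi(r_i)| < \epsilon$ for all $i$. Then for any two non-trivial elements $\phi, \psi \in X_\infty(R)$, $\psi$ lies in the closure of the $Q^\times$-orbit of $\phi$ (in the product topology on $\prod_{p} \widehat{R_+}$, where $\widehat{R_+}$ carries the topology of pointwise convergence). -/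
/-!
Write `ψ_s(x) = ψ_P(c_s x)` for `P = ∏ s` over the finitely many indices `s` to be matched and
`c_s = P / s`. The approximation property, applied to the character `π = ψ_P` at the points
`c_s x`, gives `p, q` with `φ_p(q c_s x) ≈ ψ_P(c_s x)`, and by compatibility
`φ_p(q c_s x) = φ_{s p}(q P x)`, which is the orbit element `(p / qP) · φ` evaluated at `(s, x)`.
-/

open Filter Topology

theorem mem_closure_pi_of_forall_finset_dist_lt {ι X : Type*} [PseudoMetricSpace X]
    {S : Set (ι → X)} {f : ι → X}
    (h : ∀ ε > 0, ∀ F : Finset ι, ∃ g ∈ S, ∀ i ∈ F, dist (g i) (f i) < ε) :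
    f ∈ closure S := by
  have hbasis := hasBasis_pi (f := fun i => 𝓝 (f i)) fun i => Metric.nhds_basis_ball
  rw [← nhds_pi] at hbasis
  rw [mem_closure_iff_nhds_basis hbasis]
  rintro ⟨I, δ⟩ ⟨hI, hδ⟩
  obtain ⟨ε, hεδ, hε⟩ : ∃ ε, (∀ i ∈ I, ε < δ i) ∧ 0 < ε := by
    have hsmall : ∀ᶠ ε in 𝓝[>] (0 : ℝ), ∀ i ∈ I, ε < δ i := hI.eventually_all.2 fun i hi =>
      eventually_nhdsWithin_of_eventually_nhds (eventually_lt_nhds (hδ i hi))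
    exact (hsmall.and self_mem_nhdsWithin).exists
  obtain ⟨g, hgS, hg⟩ := h ε hε hI.toFinset
  exact ⟨g, hgS, fun i hi => (hg i (hI.mem_toFinset.2 hi)).trans (hεδ i hi)⟩

theorem mem_closure_pi_pi_of_forall_finset_dist_lt {ι κ X : Type*} [PseudoMetricSpace X]
    {S : Set (ι → κ → X)} {f : ι → κ → X}
    (h : ∀ ε > 0, ∀ F : Finset (ι × κ), ∃ g ∈ S, ∀ k ∈ F, dist (g k.1 k.2) (f k.1 k.2) < ε) :
    f ∈ closure S := by
  have : Function.uncurry f ∈ closure (Homeomorph.piCurry ⁻¹' S) :=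
    mem_closure_pi_of_forall_finset_dist_lt fun ε hε F =>
      let ⟨g, hgS, hg⟩ := h ε hε F
      ⟨Function.uncurry g, hgS, hg⟩
  rwa [← Homeomorph.preimage_closure] at this

theorem exists_orbit_norm_sub_lt {R : Type*} [CommMonoidWithZero R] [NoZeroDivisors R] [Nontrivial R]
    (φ ψ : {p : R // p ≠ 0} → R → ℂ)
    (hφcompat : ∀ (p q : {p : R // p ≠ 0}) (c : R), c * (p : R) = (q : R) →
      ∀ x, φ q (c * x) = φ p x)
    (hψcompat : ∀ (p q : {p : R // p ≠ 0}) (c : R), c * (p : R) = (q : R) →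
      ∀ x, ψ q (c * x) = ψ p x)
    {ε : ℝ} (happrox : ∀ (P : {p : R // p ≠ 0}) (n : ℕ) (r : Fin n → R),
      ∃ (p q : R) (hp : p ≠ 0), q ≠ 0 ∧ ∀ i, ‖φ ⟨p, hp⟩ (q * r i) - ψ P (r i)‖ < ε)
    {n : ℕ} (s : Fin n → {p : R // p ≠ 0}) (x : Fin n → R) :
    ∃ (p₀ q₀ : R) (h₀ : p₀ ≠ 0), q₀ ≠ 0 ∧
      ∀ i, ‖φ ⟨s i * p₀, mul_ne_zero (s i).2 h₀⟩ (q₀ * x i) - ψ (s i) (x i)‖ < ε := by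
  classical
  set P : R := ∏ i, (s i : R)
  have hP : P ≠ 0 := Finset.prod_ne_zero_iff.2 fun i _ => (s i).2
  set c : Fin n → R := fun i => ∏ j ∈ Finset.univ.erase i, (s j : R)
  have hc : ∀ i, c i * s i = P := fun i => Finset.prod_erase_mul _ _ (Finset.mem_univ i)
  obtain ⟨p, q, hp, hq, hclose⟩ := happrox ⟨P, hP⟩ n fun i => c i * x i
  refine ⟨p, q * P, hp, mul_ne_zero hq hP, fun i => ?_⟩
  have hφ : φ ⟨s i * p, mul_ne_zero (s i).2 hp⟩ (q * P * x i) = φ ⟨p, hp⟩ (q * (c i * x i)) := by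
    rw [← hφcompat ⟨p, hp⟩ ⟨s i * p, mul_ne_zero (s i).2 hp⟩ (s i) rfl, ← hc i]
    ac_rfl
  have hψ : ψ (s i) (x i) = ψ ⟨P, hP⟩ (c i * x i) := (hψcompat _ _ _ (hc i) _).symm
  rw [hφ, hψ]
  exact hclose i

theorem stmt14_general (R : Type*) [CommRing R] [IsDomain R]
    (happrox : ∀ ε : ℝ, 0 < ε →
      ∀ g : {p : R // p ≠ 0} → R → ℂ,
        (∀ p x, ‖g p x‖ = 1) →
        (∀ p x y, g p (x + y) = g p x * g p y) →
        (∀ (p q : {p : R // p ≠ 0}) (c : R), c * (p : R) = (q : R) →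
          ∀ x, g q (c * x) = g p x) →
        (∃ p x, g p x ≠ 1) →
        ∀ π : R → ℂ, (∀ x, ‖π x‖ = 1) →
          (∀ x y, π (x + y) = π x * π y) →
          ∀ P : R, P ≠ 0 → ∀ (n : ℕ) (r : Fin n → R),
            ∃ (p q : R) (hp : p ≠ 0), q ≠ 0 ∧ P ∣ p ∧
              ∀ i, ‖g ⟨p, hp⟩ (q * r i) - π (r i)‖ < ε)
    (φ ψ : {p : R // p ≠ 0} → R → ℂ)
    (hφabs : ∀ p x, ‖φ p x‖ = 1)
    (hφchar : ∀ p x y, φ p (x + y) = φ p x * φ p y)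
    (hφcompat : ∀ (p q : {p : R // p ≠ 0}) (c : R), c * (p : R) = (q : R) →
      ∀ x, φ q (c * x) = φ p x)
    (hφnontriv : ∃ p x, φ p x ≠ 1)
    (hψabs : ∀ p x, ‖ψ p x‖ = 1)
    (hψchar : ∀ p x y, ψ p (x + y) = ψ p x * ψ p y)
    (hψcompat : ∀ (p q : {p : R // p ≠ 0}) (c : R), c * (p : R) = (q : R) →
      ∀ x, ψ q (c * x) = ψ p x) :
    ψ ∈ closure {χ : {p : R // p ≠ 0} → R → ℂ |
      ∃ (p₀ q₀ : R) (h₀ : p₀ ≠ 0), q₀ ≠ 0 ∧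
        χ = fun s x => φ ⟨s.1 * p₀, mul_ne_zero s.2 h₀⟩ (q₀ * x)} := by
  refine mem_closure_pi_pi_of_forall_finset_dist_lt fun ε hε F => ?_
  have happroxψ (P : {p : R // p ≠ 0}) (n : ℕ) (r : Fin n → R) :
      ∃ (p q : R) (hp : p ≠ 0), q ≠ 0 ∧ ∀ i, ‖φ ⟨p, hp⟩ (q * r i) - ψ P (r i)‖ < ε := by
    obtain ⟨p, q, hp, hq, -, hclose⟩ := happrox ε hε φ hφabs hφchar hφcompat hφnontriv (ψ P)
      (hψabs P) (hψchar P) P P.2 n r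
    exact ⟨p, q, hp, hq, hclose⟩
  obtain ⟨p₀, q₀, h₀, hq₀, hclose⟩ := exists_orbit_norm_sub_lt φ ψ hφcompat hψcompat happroxψ
    (fun i => (F.equivFin.symm i).1.1) (fun i => (F.equivFin.symm i).1.2)
  refine ⟨_, ⟨p₀, q₀, h₀, hq₀, rfl⟩, fun k hk => ?_⟩
  simpa [dist_eq_norm] using hclose (F.equivFin ⟨k, hk⟩)

/-- Under the approximation condition on `R`, for any two non-trivial elements
`φ, ψ ∈ X_∞(R)`, `ψ` lies in the closure of the `Q^×`-orbit of `φ` (in the topology of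
pointwise convergence). -/
theorem stmt14 (R : Type*) [CommRing R] [IsDomain R]
    (happrox : ∀ ε : ℝ, 0 < ε →
      ∀ g : {p : R // p ≠ 0} → R → ℂ,
        (∀ p x, ‖g p x‖ = 1) →
        (∀ p x y, g p (x + y) = g p x * g p y) →
        (∀ (p q : {p : R // p ≠ 0}) (c : R), c * (p : R) = (q : R) →
          ∀ x, g q (c * x) = g p x) →
        (∃ p x, g p x ≠ 1) →
        ∀ π : R → ℂ, (∀ x, ‖π x‖ = 1) →
          (∀ x y, π (x + y) = π x * π y) →
          ∀ P : R, P ≠ 0 → ∀ (n : ℕ) (r : Fin n → R),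
            ∃ (p q : R) (hp : p ≠ 0), q ≠ 0 ∧ P ∣ p ∧
              ∀ i, ‖g ⟨p, hp⟩ (q * r i) - π (r i)‖ < ε)
    (φ ψ : {p : R // p ≠ 0} → R → ℂ)
    (hφabs : ∀ p x, ‖φ p x‖ = 1)
    (hφchar : ∀ p x y, φ p (x + y) = φ p x * φ p y)
    (hφcompat : ∀ (p q : {p : R // p ≠ 0}) (c : R), c * (p : R) = (q : R) →
      ∀ x, φ q (c * x) = φ p x)
    (hφnontriv : ∃ p x, φ p x ≠ 1)
    (hψabs : ∀ p x, ‖ψ p x‖ = 1)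
    (hψchar : ∀ p x y, ψ p (x + y) = ψ p x * ψ p y)
    (hψcompat : ∀ (p q : {p : R // p ≠ 0}) (c : R), c * (p : R) = (q : R) →
      ∀ x, ψ q (c * x) = ψ p x)
    (hψnontriv : ∃ p x, ψ p x ≠ 1) :
    ψ ∈ closure {χ : {p : R // p ≠ 0} → R → ℂ |
      ∃ (p₀ q₀ : R) (h₀ : p₀ ≠ 0), q₀ ≠ 0 ∧
        χ = fun s x => φ ⟨s.1 * p₀, mul_ne_zero s.2 h₀⟩ (q₀ * x)} :=
  stmt14_general R happrox φ ψ hφabs hφchar hφcompat hφnontriv hψabs hψchar hψcompat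
end

section
/- The ring $\mathbb{Z}$ satisfies the approximation condition: for any $\epsilon > 0$, any non-trivial compatible family $(\phi_p)_{p \in \mathbb{Z}\setminus\{0\}}$ of characters of $\mathbb{Z}$ (i.e. $\phi_q((q/p)x) = \phi_p(x)$ when $p \mid q$, not all trivial), any character $\pi$ of $\mathbb{Z}$, any nonzero $P \in \mathbb{Z}$, and any $r_1, \dots, r_n \in \mathbb{Z}$, there exist nonzero $p, q \in \mathbb{Z}$ with $P \mid p$ such that $|\phi_p(q r_i) - \pi(r_i)| < \epsilon$ for all $i$. -/
/-!
Write `ζ_p = φ_p(1)`, so that `φ_p(x) = ζ_p ^ x`. Fix `p₀` with `φ_{p₀}` nontrivial and put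
`N_m = P p₀ m!`. Compatibility gives `ζ_{N_{m+1}} ^ (m+1) = ζ_{N_m}`, so the `ζ_{N_m}` generate an
increasing union `H` of cyclic subgroups of the circle, and `ζ_{N_m} ^ m! = ζ_{N_0} ≠ 1` shows that
`H` has no exponent. A subgroup of the circle without exponent is dense: its preimage in `ℝ` under
`t ↦ exp(it)` is dense or cyclic, and if it were `ℤa` then `2π = ka` and `k` would kill `H`. Hence
some `ζ_{N_m} ^ q` with `q ≠ 0` lies in the open neighbourhood
`{g | ∀ i, |g ^ rᵢ - π(1) ^ rᵢ| < ε}` of `π(1)`.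
-/

theorem Int.apply_eq_zpow_of_map_add_eq_mul {G₀ : Type*} [GroupWithZero G₀] {f : ℤ → G₀}
    (hf : ∀ x y, f (x + y) = f x * f y) (h0 : f 0 ≠ 0) (x : ℤ) : f x = f 1 ^ x := by
  let ψ : AddChar ℤ G₀ :=
    { toFun := f
      map_zero_eq_one' := (mul_eq_left₀ h0).mp (by rw [← hf, add_zero])
      map_add_eq_mul' := hf }
  have h := ψ.map_zsmul_eq_zpow x 1
  rwa [zsmul_eq_mul, mul_one] at h

-- Together with `ConnectedSpace Circle` this rules out isolated points.
instance : Nontrivial Circle := ⟨-1, 1, Circle.neg_ne_self 1⟩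

theorem Circle.dense_of_exponent_eq_zero (H : Subgroup Circle) (hH : Monoid.exponent H = 0) :
    Dense (H : Set Circle) := by
  set A : AddSubgroup ℝ := H.toAddSubgroup.comap Circle.expHom
  have hA : ∀ t, t ∈ A ↔ Circle.exp t ∈ H := fun t => Iff.rfl
  rcases A.dense_or_cyclic with hdense | ⟨a, ha⟩
  · have himage : Circle.exp '' A = H := Set.image_preimage_eq _ Circle.exp_surjective
    rw [← himage]
    exact Circle.exp_surjective.denseRange.dense_image Circle.exp.continuous hdense
  · obtain ⟨k, hk⟩ : ∃ k : ℤ, k • a = 2 * Real.pi := by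
      rw [← AddSubgroup.mem_zmultiples_iff, AddSubgroup.zmultiples_eq_closure, ← ha, hA,
        Circle.exp_two_pi]
      exact H.one_mem
    have hk0 : k ≠ 0 := by rintro rfl; simp [Real.pi_ne_zero] at hk
    refine absurd hH (Monoid.exponent_ne_zero.mpr ⟨k.natAbs, Int.natAbs_pos.mpr hk0, ?_⟩)
    rintro ⟨g, hg⟩
    obtain ⟨t, rfl⟩ := Circle.exp_surjective g
    obtain ⟨j, rfl⟩ : ∃ j : ℤ, j • a = t := by
      rw [← AddSubgroup.mem_zmultiples_iff, AddSubgroup.zmultiples_eq_closure, ← ha, hA]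
      exact hg
    have hgk : Circle.exp (j • a) ^ k = 1 := by
      rw [← Circle.exp_zsmul, smul_comm, hk, Circle.exp_zsmul, Circle.exp_two_pi, one_zpow]
    rw [← Subtype.coe_inj, Subgroup.coe_pow, Subgroup.coe_one]
    exact pow_natAbs_eq_one.mpr hgk

section RootTower

variable {G : Type*} [Group G] {ζ : ℕ → G}

theorem pow_factorial_eq_of_pow_succ (hζ : ∀ m, ζ (m + 1) ^ (m + 1) = ζ m) (m : ℕ) :
    ζ m ^ m.factorial = ζ 0 := by
  induction m with
  | zero => simp
  | succ m ih => rw [Nat.factorial_succ, pow_mul, hζ, ih]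

theorem monotone_zpowers_of_pow_succ (hζ : ∀ m, ζ (m + 1) ^ (m + 1) = ζ m) :
    Monotone fun m => Subgroup.zpowers (ζ m) :=
  monotone_nat_of_le_succ fun m => Subgroup.zpowers_le.mpr (hζ m ▸ Subgroup.npow_mem_zpowers _ _)

theorem mem_iSup_zpowers_of_pow_succ (hζ : ∀ m, ζ (m + 1) ^ (m + 1) = ζ m) {g : G} :
    g ∈ ⨆ m, Subgroup.zpowers (ζ m) ↔ ∃ m, ∃ q : ℤ, ζ m ^ q = g := by
  simp only [Subgroup.mem_iSup_of_directed (monotone_zpowers_of_pow_succ hζ).directed_le,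
    Subgroup.mem_zpowers_iff]

theorem exponent_iSup_zpowers_of_pow_succ (hζ : ∀ m, ζ (m + 1) ^ (m + 1) = ζ m)
    (h0 : ζ 0 ≠ 1) : Monoid.exponent ↥(⨆ m, Subgroup.zpowers (ζ m)) = 0 := by
  refine Monoid.exponent_eq_zero_iff_forall.mpr fun n hn => ?_
  refine ⟨⟨ζ n, (mem_iSup_zpowers_of_pow_succ hζ).mpr ⟨n, 1, zpow_one _⟩⟩, fun hpow => h0 ?_⟩
  obtain ⟨c, hc⟩ := Nat.dvd_factorial hn le_rfl
  rw [← pow_factorial_eq_of_pow_succ hζ n, hc, pow_mul]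
  simpa [← Subtype.coe_inj] using congrArg (· ^ c) hpow

end RootTower

theorem Circle.exists_zpow_mem_of_pow_succ {ζ : ℕ → Circle}
    (hζ : ∀ m, ζ (m + 1) ^ (m + 1) = ζ m) (h0 : ζ 0 ≠ 1) {U : Set Circle} (hU : IsOpen U)
    (hne : U.Nonempty) : ∃ m, ∃ q : ℤ, q ≠ 0 ∧ ζ m ^ q ∈ U := by
  have hdense := (Circle.dense_of_exponent_eq_zero _
    (exponent_iSup_zpowers_of_pow_succ hζ h0)).sdiff_singleton 1
  obtain ⟨g, ⟨hgH, hg1⟩, hgU⟩ := hdense.exists_mem_open hU hne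
  obtain ⟨m, q, rfl⟩ := (mem_iSup_zpowers_of_pow_succ hζ).mp hgH
  exact ⟨m, q, by rintro rfl; exact hg1 (zpow_zero _), hgU⟩

theorem Circle.exists_zpow_forall_norm_zpow_sub_lt {ζ : ℕ → Circle}
    (hζ : ∀ m, ζ (m + 1) ^ (m + 1) = ζ m) (h0 : ζ 0 ≠ 1) {ι : Type*} [Finite ι] (r : ι → ℤ)
    (w : Circle) {ε : ℝ} (hε : 0 < ε) :
    ∃ m, ∃ q : ℤ, q ≠ 0 ∧ ∀ i, ‖(ζ m : ℂ) ^ (q * r i) - (w : ℂ) ^ r i‖ < ε := by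
  have hcont (i : ι) : Continuous fun g : Circle => ((g ^ r i : Circle) : ℂ) :=
    continuous_subtype_val.comp (continuous_zpow (r i))
  have hU : IsOpen {g : Circle | ∀ i, ‖((g ^ r i : Circle) : ℂ) - (w : ℂ) ^ r i‖ < ε} := by
    simp only [Set.ofPred_forall]
    exact isOpen_iInter_of_finite fun i =>
      isOpen_lt ((hcont i).sub continuous_const).norm continuous_const
  obtain ⟨m, q, hq, hclose⟩ := exists_zpow_mem_of_pow_succ hζ h0 hU ⟨w, fun i => by simpa⟩
  exact ⟨m, q, hq, fun i => by simpa [zpow_mul] using hclose i⟩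

/-- The ring `ℤ` satisfies the approximation condition of Lemma 3.3: for any `ε > 0`, any
non-trivial compatible family `(φ_p)` of characters of `ℤ`, any character `π` of `ℤ`, any
nonzero `P`, and any `r₁, …, rₙ ∈ ℤ`, there are nonzero `p, q` with `P ∣ p` and
`|φ_p(q rᵢ) - π(rᵢ)| < ε` for all `i`. -/
theorem stmt16 (ε : ℝ) (hε : 0 < ε)
    (φ : {p : ℤ // p ≠ 0} → ℤ → ℂ)
    (habs : ∀ p x, ‖φ p x‖ = 1)
    (hchar : ∀ p x y, φ p (x + y) = φ p x * φ p y)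
    (hcompat : ∀ (p q : {p : ℤ // p ≠ 0}) (c : ℤ), c * (p : ℤ) = (q : ℤ) →
      ∀ x, φ q (c * x) = φ p x)
    (hnontriv : ∃ p x, φ p x ≠ 1)
    (π : ℤ → ℂ) (hπabs : ∀ x, ‖π x‖ = 1)
    (hπchar : ∀ x y, π (x + y) = π x * π y)
    (P : ℤ) (hP : P ≠ 0) (n : ℕ) (r : Fin n → ℤ) :
    ∃ (p q : ℤ) (hp : p ≠ 0), q ≠ 0 ∧ P ∣ p ∧
      ∀ i, ‖φ ⟨p, hp⟩ (q * r i) - π (r i)‖ < ε := by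
  obtain ⟨p₀, x₀, hx₀⟩ := hnontriv
  have hφ : ∀ p (x : ℤ), φ p x = φ p 1 ^ x := fun p =>
    Int.apply_eq_zpow_of_map_add_eq_mul (hchar p) (by simp [← norm_ne_zero_iff, habs])
  have hπ : ∀ x : ℤ, π x = π 1 ^ x :=
    Int.apply_eq_zpow_of_map_add_eq_mul hπchar (by simp [← norm_ne_zero_iff, hπabs])
  let S (m : ℕ) : {p : ℤ // p ≠ 0} := ⟨P * p₀ * m.factorial, by have := p₀.2; positivity⟩
  let ζ (m : ℕ) : Circle := ⟨φ (S m) 1, by simp [Submonoid.unitSphere, habs]⟩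
  have hζ (m : ℕ) : ζ (m + 1) ^ (m + 1) = ζ m := by
    have h := hcompat (S m) (S (m + 1)) (m + 1) (by simp [S, Nat.factorial_succ]; ring) 1
    rw [mul_one, hφ] at h
    rw [← Circle.coe_inj, Circle.coe_pow]
    exact_mod_cast h
  have hζ0 : ζ 0 ≠ 1 := by
    intro h
    have h1 : φ (S 0) 1 = 1 := congrArg Subtype.val h
    rw [← hcompat p₀ (S 0) P (by simp [S]) x₀, hφ, h1, one_zpow] at hx₀
    exact hx₀ rfl
  obtain ⟨m, q, hq, hclose⟩ := Circle.exists_zpow_forall_norm_zpow_sub_lt hζ hζ0 r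
    ⟨π 1, by simp [Submonoid.unitSphere, hπabs]⟩ hε
  refine ⟨S m, q, (S m).2, hq, ⟨p₀ * m.factorial, by ring⟩, fun i => ?_⟩
  rw [hφ, hπ]
  exact hclose i
end
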